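/- Let A = ℤ⟨X,Y⟩. Then for all a, b ∈ A, the element a²b² − b²a² lies in H := A₄⁰ + F⁵A + 2A. (In particular, H is a two-sided ideal of A and the images of all squares commute in A/H.) -/

import Mathlib

/-- Words in the two letters `X, Y`. -/
abbrev FW := FreeMonoid (Fin 2)

/-- `A = ℤ⟨X,Y⟩`. -/
abbrev A2 := MonoidAlgebra ℤ FW

/-- The word `XYXY`. -/
def wXYXY : FW := FreeMonoid.of 0 * FreeMonoid.of 1 * FreeMonoid.of 0 * FreeMonoid.of 1

/-- The word `YXYX`. -/
def wYXYX : FW := FreeMonoid.of 1 * FreeMonoid.of 0 * FreeMonoid.of 1 * FreeMonoid.of 0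

/-- Generators of `A₄⁰`: all words of length `4` except `XYXY` and `YXYX`. -/
def A40set : Set A2 :=
  {x | ∃ w : FW, w.length = 4 ∧ w ≠ wXYXY ∧ w ≠ wYXYX ∧ x = MonoidAlgebra.of ℤ FW w}

/-- The words of length `≥ n`; they generate `FⁿA = ⊕_{i≥n} A_i` as an additive group. -/
def FdegSet (n : ℕ) : Set A2 :=
  {x | ∃ w : FW, n ≤ w.length ∧ x = MonoidAlgebra.of ℤ FW w}

/-- The set `2A`. -/
def twoA : Set A2 := {x | ∃ a : A2, x = 2 * a}

/-- `H := A₄⁰ + F⁵A + 2A`, as the additive subgroup generated by the union. -/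
noncomputable def Hsub : AddSubgroup A2 := AddSubgroup.closure (A40set ∪ FdegSet 5 ∪ twoA)

/-!
Write `a = c + p + s` with `c ∈ ℤ`, `p` linear and `s ∈ F²A`, and similarly `b = d + q + t`.
Since `(c + u)² = c² + u² + 2cu` with `c²` central, the constants only contribute to
`[a², b²]` modulo `2A`. Since `(p + s)² ≡ p²` modulo `F³A`, replacing `(p + s)²` and `(q + t)²`
by `p²` and `q²` only changes the commutator modulo `F⁵A`. Finally `[p², q²]` is a combination of
commutators `uv - vu` of words of length `2`, and by unique factorisation `uv` can only be one of
the squares `XYXY = (XY)²`, `YXYX = (YX)²` when `u = v`, in which case `uv - vu = 0`.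
-/

open Submodule
open scoped Pointwise

theorem exists_commutator_sq_intCast_add {R : Type*} [Ring R] (c d : ℤ) (u v : R) :
    ∃ z : R, ((c : R) + u) ^ 2 * ((d : R) + v) ^ 2 - ((d : R) + v) ^ 2 * ((c : R) + u) ^ 2 =
      u ^ 2 * v ^ 2 - v ^ 2 * u ^ 2 + 2 * z := by
  refine ⟨(2 * c * d) • (u * v - v * u) + c • (u * v ^ 2 - v ^ 2 * u) +
    d • (u ^ 2 * v - v * u ^ 2), ?_⟩
  simp only [← zsmul_one, pow_two, mul_add, add_mul, mul_sub, smul_mul_assoc, mul_smul_comm,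
    smul_smul, one_mul, mul_one, smul_add, smul_sub, mul_assoc, two_mul]
  module

theorem FreeMonoid.eq_of_mul_eq_mul_self {α : Type*} {x y z : FreeMonoid α}
    (h : x * y = z * z) (hl : x.length = z.length) : x = y := by
  obtain ⟨hx, hy⟩ := List.append_inj (congrArg FreeMonoid.toList h) hl
  exact FreeMonoid.toList.injective (hx.trans hy.symm)

noncomputable def wordSpan (S : Set FW) : Submodule ℤ A2 := span ℤ (MonoidAlgebra.of ℤ FW '' S)

theorem of_mem_wordSpan {S : Set FW} {w : FW} (h : w ∈ S) :
    MonoidAlgebra.of ℤ FW w ∈ wordSpan S :=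
  subset_span (Set.mem_image_of_mem _ h)

theorem wordSpan_mono {S T : Set FW} (h : S ⊆ T) : wordSpan S ≤ wordSpan T :=
  span_mono (Set.image_mono h)

theorem wordSpan_mul_wordSpan (S T : Set FW) : wordSpan S * wordSpan T = wordSpan (S * T) := by
  rw [wordSpan, wordSpan, wordSpan, span_mul_span, Set.image_mul]

theorem mul_mem_wordSpan {S T U : Set FW} (hU : S * T ⊆ U) {x y : A2} (hx : x ∈ wordSpan S)
    (hy : y ∈ wordSpan T) : x * y ∈ wordSpan U :=
  wordSpan_mono hU (wordSpan_mul_wordSpan S T ▸ mul_mem_mul hx hy)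

theorem wordSpan_length_ge_anti {j k : ℕ} (h : j ≤ k) :
    wordSpan {w | k ≤ w.length} ≤ wordSpan {w | j ≤ w.length} :=
  wordSpan_mono fun _ hw => h.trans hw

theorem mul_mem_wordSpan_length_ge {j k n : ℕ} (hn : n ≤ j + k) {x y : A2}
    (hx : x ∈ wordSpan {w | j ≤ w.length}) (hy : y ∈ wordSpan {w | k ≤ w.length}) :
    x * y ∈ wordSpan {w | n ≤ w.length} := by
  refine mul_mem_wordSpan (Set.mul_subset_iff.2 fun u hu v hv => ?_) hx hy
  simp only [Set.mem_ofPred_eq, FreeMonoid.length_mul] at hu hv ⊢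
  omega

theorem mul_mem_wordSpan_length_eq {j k : ℕ} {x y : A2}
    (hx : x ∈ wordSpan {w | w.length = j}) (hy : y ∈ wordSpan {w | w.length = k}) :
    x * y ∈ wordSpan {w | w.length = j + k} := by
  refine mul_mem_wordSpan (Set.mul_subset_iff.2 fun u hu v hv => ?_) hx hy
  simp only [Set.mem_ofPred_eq, FreeMonoid.length_mul] at hu hv ⊢
  omega

theorem exists_intCast_add_add (a : A2) : ∃ (c : ℤ) (p s : A2),
    p ∈ wordSpan {w | w.length = 1} ∧ s ∈ wordSpan {w | 2 ≤ w.length} ∧ a = c + (p + s) := by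
  induction a using MonoidAlgebra.induction_on with
  | of w =>
    rcases Nat.lt_trichotomy w.length 1 with h | h | h
    · obtain rfl : w = 1 := FreeMonoid.length_eq_zero.1 (by omega)
      exact ⟨1, 0, 0, zero_mem _, zero_mem _, by simp [map_one]⟩
    · exact ⟨0, _, 0, of_mem_wordSpan h, zero_mem _, by simp⟩
    · exact ⟨0, 0, _, zero_mem _, of_mem_wordSpan (show 2 ≤ w.length from h), by simp⟩
  | add x y hx hy =>
    obtain ⟨c, p, s, hp, hs, rfl⟩ := hx
    obtain ⟨c', p', s', hp', hs', rfl⟩ := hy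
    exact ⟨c + c', p + p', s + s', add_mem hp hp', add_mem hs hs', by push_cast; abel⟩
  | smul r x hx =>
    obtain ⟨c, p, s, hp, hs, rfl⟩ := hx
    exact ⟨r * c, r • p, r • s, smul_mem _ r hp, smul_mem _ r hs, by
      rw [smul_add, smul_add, zsmul_eq_mul, Int.cast_mul]⟩

theorem sq_mem_wordSpan_length_eq_two {p : A2} (hp : p ∈ wordSpan {w | w.length = 1}) :
    p ^ 2 ∈ wordSpan {w | w.length = 2} :=
  pow_two p ▸ mul_mem_wordSpan_length_eq (j := 1) (k := 1) hp hp

theorem sq_add_sub_sq_mem_wordSpan {p s : A2} (hp : p ∈ wordSpan {w | w.length = 1})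
    (hs : s ∈ wordSpan {w | 2 ≤ w.length}) :
    (p + s) ^ 2 - p ^ 2 ∈ wordSpan {w | 3 ≤ w.length} := by
  have hp' : p ∈ wordSpan {w | 1 ≤ w.length} := wordSpan_mono (fun _ hw => hw.ge) hp
  have hs' : s ∈ wordSpan {w | 1 ≤ w.length} := wordSpan_length_ge_anti one_le_two hs
  rw [show (p + s) ^ 2 - p ^ 2 = p * s + s * (p + s) by noncomm_ring]
  exact add_mem (mul_mem_wordSpan_length_ge (by norm_num) hp' hs)
    (mul_mem_wordSpan_length_ge (by norm_num) hs (add_mem hp' hs'))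

theorem commutator_add_sub_commutator_mem_wordSpan {P Q δ ε : A2}
    (hP : P ∈ wordSpan {w | 2 ≤ w.length}) (hQ : Q ∈ wordSpan {w | 2 ≤ w.length})
    (hδ : δ ∈ wordSpan {w | 3 ≤ w.length}) (hε : ε ∈ wordSpan {w | 3 ≤ w.length}) :
    (P + δ) * (Q + ε) - (Q + ε) * (P + δ) - (P * Q - Q * P) ∈ wordSpan {w | 5 ≤ w.length} := by
  rw [show (P + δ) * (Q + ε) - (Q + ε) * (P + δ) - (P * Q - Q * P) =
    (P * ε - ε * P) + (δ * Q - Q * δ) + (δ * ε - ε * δ) by noncomm_ring]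
  have hmul {j k : ℕ} (h : 5 ≤ j + k) {x y : A2} (hx : x ∈ wordSpan {w | j ≤ w.length})
      (hy : y ∈ wordSpan {w | k ≤ w.length}) : x * y - y * x ∈ wordSpan {w | 5 ≤ w.length} :=
    sub_mem (mul_mem_wordSpan_length_ge h hx hy) (mul_mem_wordSpan_length_ge (by omega) hy hx)
  exact add_mem (add_mem (hmul (by norm_num) hP hε) (hmul (by norm_num) hδ hQ))
    (hmul (by norm_num) hδ hε)

theorem commutator_sq_add_sub_mem_wordSpan {p s q t : A2}
    (hp : p ∈ wordSpan {w | w.length = 1}) (hs : s ∈ wordSpan {w | 2 ≤ w.length})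
    (hq : q ∈ wordSpan {w | w.length = 1}) (ht : t ∈ wordSpan {w | 2 ≤ w.length}) :
    (p + s) ^ 2 * (q + t) ^ 2 - (q + t) ^ 2 * (p + s) ^ 2 - (p ^ 2 * q ^ 2 - q ^ 2 * p ^ 2) ∈
      wordSpan {w | 5 ≤ w.length} := by
  have h := commutator_add_sub_commutator_mem_wordSpan
    (wordSpan_mono (fun _ hw => hw.ge) (sq_mem_wordSpan_length_eq_two hp))
    (wordSpan_mono (fun _ hw => hw.ge) (sq_mem_wordSpan_length_eq_two hq))
    (sq_add_sub_sq_mem_wordSpan hp hs) (sq_add_sub_sq_mem_wordSpan hq ht)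
  rwa [add_sub_cancel, add_sub_cancel] at h

theorem two_mul_mem_Hsub (z : A2) : 2 * z ∈ Hsub :=
  AddSubgroup.subset_closure (Or.inr ⟨z, rfl⟩)

theorem wXYXY_eq_mul_self :
    wXYXY = FreeMonoid.of 0 * FreeMonoid.of 1 * (FreeMonoid.of 0 * FreeMonoid.of 1) :=
  rfl

theorem wYXYX_eq_mul_self :
    wYXYX = FreeMonoid.of 1 * FreeMonoid.of 0 * (FreeMonoid.of 1 * FreeMonoid.of 0) :=
  rfl

theorem of_mem_Hsub_of_length_eq_four {w : FW} (h : w.length = 4) (hXYXY : w ≠ wXYXY)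
    (hYXYX : w ≠ wYXYX) :
    MonoidAlgebra.of ℤ FW w ∈ Hsub :=
  AddSubgroup.subset_closure (Or.inl (Or.inl ⟨w, h, hXYXY, hYXYX, rfl⟩))

theorem mem_Hsub_of_mem_wordSpan {x : A2} (hx : x ∈ wordSpan {w | 5 ≤ w.length}) : x ∈ Hsub :=
  (span_le (p := Hsub.toIntSubmodule)).2 (by
    rintro _ ⟨w, hw, rfl⟩
    exact AddSubgroup.subset_closure (Or.inl (Or.inr ⟨w, hw, rfl⟩))) hx

theorem of_mul_of_sub_mem_Hsub {u v : FW} (hu : u.length = 2) (hv : v.length = 2) :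
    MonoidAlgebra.of ℤ FW u * MonoidAlgebra.of ℤ FW v -
      MonoidAlgebra.of ℤ FW v * MonoidAlgebra.of ℤ FW u ∈ Hsub := by
  by_cases huv : u = v
  · simp [huv]
  have hmem {x y : FW} (hx : x.length = 2) (hy : y.length = 2) (hxy : x ≠ y) :
      MonoidAlgebra.of ℤ FW (x * y) ∈ Hsub := by
    have hne (z : FW) (hz : z.length = 2) : x * y ≠ z * z := fun h =>
      hxy (FreeMonoid.eq_of_mul_eq_mul_self h (hx.trans hz.symm))
    exact of_mem_Hsub_of_length_eq_four (by simp [hx, hy]) (wXYXY_eq_mul_self ▸ hne _ rfl)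
      (wYXYX_eq_mul_self ▸ hne _ rfl)
  rw [← map_mul, ← map_mul]
  exact sub_mem (hmem hu hv huv) (hmem hv hu (Ne.symm huv))

theorem commutator_mem_Hsub {P Q : A2} (hP : P ∈ wordSpan {w | w.length = 2})
    (hQ : Q ∈ wordSpan {w | w.length = 2}) : P * Q - Q * P ∈ Hsub := by
  let f : A2 →ₗ[ℤ] A2 →ₗ[ℤ] A2 := LinearMap.mul ℤ A2 - (LinearMap.mul ℤ A2).flip
  have hmap := apply_mem_map₂ f hP hQ
  rw [wordSpan, map₂_span_span] at hmap
  refine (span_le (p := Hsub.toIntSubmodule)).2 ?_ hmap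
  rintro _ ⟨_, ⟨u, hu, rfl⟩, _, ⟨v, hv, rfl⟩, rfl⟩
  exact of_mul_of_sub_mem_Hsub hu hv

/-- for all `a, b ∈ ℤ⟨X,Y⟩`, the element `a²b² − b²a²` lies in
`H = A₄⁰ + F⁵A + 2A`. -/
theorem stmt11 (a b : A2) : a ^ 2 * b ^ 2 - b ^ 2 * a ^ 2 ∈ Hsub := by
  obtain ⟨c, p, s, hp, hs, rfl⟩ := exists_intCast_add_add a
  obtain ⟨d, q, t, hq, ht, rfl⟩ := exists_intCast_add_add b
  obtain ⟨z, hz⟩ := exists_commutator_sq_intCast_add c d (p + s) (q + t)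
  rw [hz, ← sub_add_cancel (_ - _) (p ^ 2 * q ^ 2 - q ^ 2 * p ^ 2)]
  have hhigh := mem_Hsub_of_mem_wordSpan (commutator_sq_add_sub_mem_wordSpan hp hs hq ht)
  have hlinear :=
    commutator_mem_Hsub (sq_mem_wordSpan_length_eq_two hp) (sq_mem_wordSpan_length_eq_two hq)
  exact add_mem (add_mem hhigh hlinear) (two_mul_mem_Hsub z)
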